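/- Let w > 0, σ > 0, N ≥ 1, assume D ∩ C_σ is nonempty, fix reference parameters (r_x, r_u), and let (x̊, ů) with x̊ = (x̊_e, x̊_s, x̊_c) be the unique minimizer of V_h over D ∩ C_σ. Then there exists a constant c > 0, depending only on Q and on the strong-convexity modulus of V_h, such that for every x in the feasibility region of HMPC: H*(x; r_x, r_u) − V_h(x̊, ů) ≥ c · ‖x − (x̊_e + x̊_c)‖². In particular, one may take c = (1/2)·min{λ_min(Q), μ/4}, where λ_min(Q) is the smallest eigenvalue of Q and μ > 0 is any constant for which V_h is μ-strongly convex. -/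

import Mathlib

/-!
A feasible solution with parameters `p` costs at least its first stage plus `V_h(p)`, and the first
stage costs at least `λ ‖x − (p_e + p_c)‖²`. The set `D ∩ C_σ` is convex (a linear subspace cut by
second-order cones), so the `μ`-strongly convex `V_h` grows quadratically away from its minimiser:
`V_h(p) − V_h(x̊, ů) ≥ (μ/2) ‖p − (x̊, ů)‖²`. Writing
`x − (x̊_e + x̊_c) = (x − (p_e + p_c)) + (p_e − x̊_e) + (p_c − x̊_c)` and applying Cauchy–Schwarz
with weights `1/2, 1/4, 1/4` gives the constant `min{λ, μ/4} / 2`.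
-/

open Matrix Filter

/-- Vectors in `ℝ^n`. -/
abbrev RVec (n : ℕ) := Fin n → ℝ

/-- A parameter triple `(v_e, v_s, v_c) ∈ (ℝ^m)³` of a harmonic signal. -/
abbrev HTriple (n : ℕ) := RVec n × RVec n × RVec n

/-- A parameter pair `((x̂_e, x̂_s, x̂_c), (û_e, û_s, û_c))`. -/
abbrev HParams (nx nu : ℕ) := HTriple nx × HTriple nu

/-- Value at (relative) time `k` of the harmonic signal parameterized by the triple `v`
with frequency `w`: `v_e + v_s sin(w k) + v_c cos(w k)`. -/
noncomputable def hSeq {m : ℕ} (w : ℝ) (v : HTriple m) (k : ℕ) : RVec m :=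
  v.1 + Real.sin (w * (k : ℝ)) • v.2.1 + Real.cos (w * (k : ℝ)) • v.2.2

/-- The transform `T̂_w^m` acting on parameter triples: the identity acts on `v_e` and the
rotation `T_w^m = [[cos w · I, -sin w · I], [sin w · I, cos w · I]]` acts on `(v_s, v_c)`. -/
noncomputable def hatT {m : ℕ} (w : ℝ) (v : HTriple m) : HTriple m :=
  (v.1, Real.cos w • v.2.1 - Real.sin w • v.2.2, Real.sin w • v.2.1 + Real.cos w • v.2.2)

/-- Membership in the set `D` (harmonic parameters consistent with the dynamics `x⁺ = Ax + Bu`). -/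
def inD {nx nu : ℕ} (A : Matrix (Fin nx) (Fin nx) ℝ) (B : Matrix (Fin nx) (Fin nu) ℝ)
    (w : ℝ) (p : HParams nx nu) : Prop :=
  p.1.1 = A.mulVec p.1.1 + B.mulVec p.2.1 ∧
  Real.cos w • p.1.2.1 - Real.sin w • p.1.2.2 = A.mulVec p.1.2.1 + B.mulVec p.2.2.1 ∧
  Real.sin w • p.1.2.1 + Real.cos w • p.1.2.2 = A.mulVec p.1.2.2 + B.mulVec p.2.2.2

/-- Membership in the set `C_σ` (second-order-cone conditions guaranteeing constraint
satisfaction of the harmonic signal). -/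
def inC {nx nu ny : ℕ} (E : Matrix (Fin ny) (Fin nx) ℝ) (F : Matrix (Fin ny) (Fin nu) ℝ)
    (ylo yhi : RVec ny) (σ : ℝ) (p : HParams nx nu) : Prop :=
  ∀ i : Fin ny,
    Real.sqrt ((E.mulVec p.1.2.1 + F.mulVec p.2.2.1) i ^ 2
        + (E.mulVec p.1.2.2 + F.mulVec p.2.2.2) i ^ 2)
      ≤ yhi i - σ - (E.mulVec p.1.1 + F.mulVec p.2.1) i ∧
    Real.sqrt ((E.mulVec p.1.2.1 + F.mulVec p.2.2.1) i ^ 2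
        + (E.mulVec p.1.2.2 + F.mulVec p.2.2.2) i ^ 2)
      ≤ (E.mulVec p.1.1 + F.mulVec p.2.1) i - ylo i - σ

/-- The set `D ∩ C_σ` of admissible harmonic parameters. -/
def paramSet {nx nu ny : ℕ} (A : Matrix (Fin nx) (Fin nx) ℝ) (B : Matrix (Fin nx) (Fin nu) ℝ)
    (E : Matrix (Fin ny) (Fin nx) ℝ) (F : Matrix (Fin ny) (Fin nu) ℝ)
    (ylo yhi : RVec ny) (w σ : ℝ) : Set (HParams nx nu) :=
  {p | inD A B w p ∧ inC E F ylo yhi σ p}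

/-- The quadratic form `‖v‖²_M = vᵀ M v`. -/
def quadForm {n : ℕ} (M : Matrix (Fin n) (Fin n) ℝ) (v : RVec n) : ℝ :=
  v ⬝ᵥ M.mulVec v

/-- The offset cost `V_h` with reference parameters `r` evaluated at parameters `p`. -/
def Vh {nx nu : ℕ} (Te Th : Matrix (Fin nx) (Fin nx) ℝ) (Se Sh : Matrix (Fin nu) (Fin nu) ℝ)
    (r p : HParams nx nu) : ℝ :=
  quadForm Te (p.1.1 - r.1.1) + quadForm Th (p.1.2.1 - r.1.2.1)
    + quadForm Th (p.1.2.2 - r.1.2.2)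
    + quadForm Se (p.2.1 - r.2.1) + quadForm Sh (p.2.2.1 - r.2.2.1)
    + quadForm Sh (p.2.2.2 - r.2.2.2)

/-- `p` is the unique minimizer of `f` on `S`. -/
def IsUniqueMinOn {α : Type*} (f : α → ℝ) (S : Set α) (p : α) : Prop :=
  p ∈ S ∧ ∀ q ∈ S, q ≠ p → f p < f q

/-- `(xs, us, p)` is a feasible solution of the HMPC optimization problem for the state `x`. -/
def FeasSol {nx nu ny : ℕ} (A : Matrix (Fin nx) (Fin nx) ℝ) (B : Matrix (Fin nx) (Fin nu) ℝ)
    (E : Matrix (Fin ny) (Fin nx) ℝ) (F : Matrix (Fin ny) (Fin nu) ℝ)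
    (ylo yhi : RVec ny) (w σ : ℝ) (N : ℕ) (x : RVec nx)
    (xs : ℕ → RVec nx) (us : ℕ → RVec nu) (p : HParams nx nu) : Prop :=
  xs 0 = x ∧
  (∀ k < N, xs (k + 1) = A.mulVec (xs k) + B.mulVec (us k)) ∧
  (∀ k < N, ∀ i, ylo i ≤ (E.mulVec (xs k) + F.mulVec (us k)) i
      ∧ (E.mulVec (xs k) + F.mulVec (us k)) i ≤ yhi i) ∧
  xs N = hSeq w p.1 N ∧
  inD A B w p ∧ inC E F ylo yhi σ p

/-- `x` belongs to the feasibility region of the HMPC optimization problem. -/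
def Feasible {nx nu ny : ℕ} (A : Matrix (Fin nx) (Fin nx) ℝ) (B : Matrix (Fin nx) (Fin nu) ℝ)
    (E : Matrix (Fin ny) (Fin nx) ℝ) (F : Matrix (Fin ny) (Fin nu) ℝ)
    (ylo yhi : RVec ny) (w σ : ℝ) (N : ℕ) (x : RVec nx) : Prop :=
  ∃ xs us p, FeasSol A B E F ylo yhi w σ N x xs us p

/-- The HMPC cost `J` of a solution `(xs, us, p)` with reference parameters `r`. -/
noncomputable def Jcost {nx nu : ℕ} (Q Te Th : Matrix (Fin nx) (Fin nx) ℝ)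
    (R Se Sh : Matrix (Fin nu) (Fin nu) ℝ) (w : ℝ) (N : ℕ) (r : HParams nx nu)
    (xs : ℕ → RVec nx) (us : ℕ → RVec nu) (p : HParams nx nu) : ℝ :=
  (∑ k ∈ Finset.range N,
      (quadForm Q (xs k - hSeq w p.1 k) + quadForm R (us k - hSeq w p.2 k)))
    + Vh Te Th Se Sh r p

/-- `(xs, us, p)` is an optimal solution of the HMPC optimization problem for state `x` and
reference parameters `r`. -/
noncomputable def OptSol {nx nu ny : ℕ} (A : Matrix (Fin nx) (Fin nx) ℝ)
    (B : Matrix (Fin nx) (Fin nu) ℝ)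
    (E : Matrix (Fin ny) (Fin nx) ℝ) (F : Matrix (Fin ny) (Fin nu) ℝ)
    (ylo yhi : RVec ny) (Q Te Th : Matrix (Fin nx) (Fin nx) ℝ)
    (R Se Sh : Matrix (Fin nu) (Fin nu) ℝ) (w σ : ℝ) (N : ℕ) (r : HParams nx nu)
    (x : RVec nx) (xs : ℕ → RVec nx) (us : ℕ → RVec nu) (p : HParams nx nu) : Prop :=
  FeasSol A B E F ylo yhi w σ N x xs us p ∧
  ∀ xs' us' p', FeasSol A B E F ylo yhi w σ N x xs' us' p' →
    Jcost Q Te Th R Se Sh w N r xs us p ≤ Jcost Q Te Th R Se Sh w N r xs' us' p'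

/-- The optimal value `H*(x; r)` of the HMPC optimization problem. -/
noncomputable def Hstar {nx nu ny : ℕ} (A : Matrix (Fin nx) (Fin nx) ℝ)
    (B : Matrix (Fin nx) (Fin nu) ℝ)
    (E : Matrix (Fin ny) (Fin nx) ℝ) (F : Matrix (Fin ny) (Fin nu) ℝ)
    (ylo yhi : RVec ny) (Q Te Th : Matrix (Fin nx) (Fin nx) ℝ)
    (R Se Sh : Matrix (Fin nu) (Fin nu) ℝ) (w σ : ℝ) (N : ℕ) (r : HParams nx nu)
    (x : RVec nx) : ℝ :=
  sInf {J : ℝ | ∃ xs us p, FeasSol A B E F ylo yhi w σ N x xs us p ∧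
    J = Jcost Q Te Th R Se Sh w N r xs us p}

/-- The controllability matrix `[B, AB, …, A^{ν−1}B]` of the pair `(A, B)`. -/
def ctrbMat {nx nu : ℕ} (A : Matrix (Fin nx) (Fin nx) ℝ) (B : Matrix (Fin nx) (Fin nu) ℝ)
    (ν : ℕ) : Matrix (Fin nx) (Fin ν × Fin nu) ℝ :=
  Matrix.of fun i q => ((A ^ (q.1 : ℕ)) * B) i q.2

/-- Squared Euclidean norm of a vector. -/
def nsq {n : ℕ} (v : RVec n) : ℝ := ∑ i, v i ^ 2

/-- Squared Euclidean norm of a parameter pair. -/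
def pNsq {nx nu : ℕ} (p : HParams nx nu) : ℝ :=
  nsq p.1.1 + nsq p.1.2.1 + nsq p.1.2.2 + nsq p.2.1 + nsq p.2.2.1 + nsq p.2.2.2

/-- `f` is `μ`-strongly convex on the parameter space:
`f z − f y ≥ ⟨∇f(y), z − y⟩ + (μ/2)‖z − y‖²` for all `z, y`. -/
def StrConvVh {nx nu : ℕ} (μ : ℝ) (f : HParams nx nu → ℝ) : Prop :=
  ∀ z y : HParams nx nu, f z - f y ≥ (fderiv ℝ f y) (z - y) + μ / 2 * pNsq (z - y)

/-- The rotation matrix `T_w^m = [[cos w · I, −sin w · I], [sin w · I, cos w · I]] ∈ ℝ^{2m×2m}`. -/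
noncomputable def TwMat (m : ℕ) (w : ℝ) : Matrix (Fin m ⊕ Fin m) (Fin m ⊕ Fin m) ℝ :=
  Matrix.fromBlocks (Real.cos w • (1 : Matrix (Fin m) (Fin m) ℝ))
    (-(Real.sin w • (1 : Matrix (Fin m) (Fin m) ℝ)))
    (Real.sin w • (1 : Matrix (Fin m) (Fin m) ℝ))
    (Real.cos w • (1 : Matrix (Fin m) (Fin m) ℝ))

/-- The matrix `T̂_w^m = diag(I_m, T_w^m) ∈ ℝ^{3m×3m}`. -/
noncomputable def ThatMat (m : ℕ) (w : ℝ) :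
    Matrix (Fin m ⊕ (Fin m ⊕ Fin m)) (Fin m ⊕ (Fin m ⊕ Fin m)) ℝ :=
  Matrix.fromBlocks (1 : Matrix (Fin m) (Fin m) ℝ) 0 0 (TwMat m w)

lemma nsq_nonneg {n : ℕ} (v : RVec n) : 0 ≤ nsq v :=
  Finset.sum_nonneg fun _ _ => sq_nonneg _

lemma nsq_smul {n : ℕ} (c : ℝ) (v : RVec n) : nsq (c • v) = c ^ 2 * nsq v := by
  simp [nsq, Finset.mul_sum, mul_pow]

lemma pNsq_smul {nx nu : ℕ} (c : ℝ) (p : HParams nx nu) : pNsq (c • p) = c ^ 2 * pNsq p := by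
  simp only [pNsq, Prod.smul_fst, Prod.smul_snd, nsq_smul]
  ring

lemma nsq_fst_fst_add_nsq_fst_snd_snd_le_pNsq {nx nu : ℕ} (p : HParams nx nu) :
    nsq p.1.1 + nsq p.1.2.2 ≤ pNsq p := by
  have := nsq_nonneg p.1.2.1
  have := nsq_nonneg p.2.1
  have := nsq_nonneg p.2.2.1
  have := nsq_nonneg p.2.2.2
  simp only [pNsq]
  linarith

lemma nsq_add_add_le {n : ℕ} (a b d : RVec n) :
    nsq (a + b + d) ≤ 2 * nsq a + 4 * nsq b + 4 * nsq d := by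
  simp only [nsq, Finset.mul_sum, ← Finset.sum_add_distrib]
  refine Finset.sum_le_sum fun i _ => ?_
  simp only [Pi.add_apply]
  nlinarith [sq_nonneg (a i - b i - d i), sq_nonneg (b i - d i)]

lemma half_min_mul_nsq_add_add_le {n : ℕ} {lam μ : ℝ} (hlam : 0 ≤ lam) (hμ : 0 ≤ μ)
    (a b d : RVec n) :
    1 / 2 * min lam (μ / 4) * nsq (a + b + d) ≤ lam * nsq a + μ / 2 * (nsq b + nsq d) := by
  have hc : 0 ≤ min lam (μ / 4) := le_min hlam (by linarith)
  have ha := mul_le_mul_of_nonneg_right (min_le_left lam (μ / 4)) (nsq_nonneg a)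
  have hbd := mul_le_mul_of_nonneg_right (min_le_right lam (μ / 4))
    (add_nonneg (nsq_nonneg b) (nsq_nonneg d))
  nlinarith [mul_le_mul_of_nonneg_left (nsq_add_add_le a b d) hc, nsq_nonneg b, nsq_nonneg d]

lemma quadForm_nonneg {n : ℕ} {M : Matrix (Fin n) (Fin n) ℝ} (hM : M.PosSemidef) (v : RVec n) :
    0 ≤ quadForm M v :=
  hM.dotProduct_mulVec_nonneg v

lemma hSeq_zero {m : ℕ} (w : ℝ) (v : HTriple m) : hSeq w v 0 = v.1 + v.2.2 := by
  simp [hSeq]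

lemma sqrt_sq_add_sq_add_le (x y x' y' : ℝ) :
    √((x + x') ^ 2 + (y + y') ^ 2) ≤ √(x ^ 2 + y ^ 2) + √(x' ^ 2 + y' ^ 2) := by
  simpa [Complex.norm_eq_sqrt_sq_add_sq] using norm_add_le (⟨x, y⟩ : ℂ) ⟨x', y'⟩

lemma sqrt_mul_sq_add_mul_sq {a : ℝ} (ha : 0 ≤ a) (x y : ℝ) :
    √((a * x) ^ 2 + (a * y) ^ 2) = a * √(x ^ 2 + y ^ 2) := by
  rw [show (a * x) ^ 2 + (a * y) ^ 2 = a ^ 2 * (x ^ 2 + y ^ 2) by ring,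
    Real.sqrt_mul (sq_nonneg a), Real.sqrt_sq ha]

lemma mulVec_add_mulVec_apply_smul_add_smul {k n m : ℕ} (M : Matrix (Fin k) (Fin n) ℝ)
    (M' : Matrix (Fin k) (Fin m) ℝ) (a b : ℝ) (v v' : RVec n) (u u' : RVec m) (i : Fin k) :
    (M *ᵥ (a • v + b • v') + M' *ᵥ (a • u + b • u')) i
      = a * (M *ᵥ v + M' *ᵥ u) i + b * (M *ᵥ v' + M' *ᵥ u') i := by
  simp only [mulVec_add, mulVec_smul, Pi.add_apply, Pi.smul_apply, smul_eq_mul]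
  ring

def inDSubmodule {nx nu : ℕ} (A : Matrix (Fin nx) (Fin nx) ℝ) (B : Matrix (Fin nx) (Fin nu) ℝ)
    (w : ℝ) : Submodule ℝ (HParams nx nu) where
  carrier := {p | inD A B w p}
  zero_mem' := by simp [inD]
  add_mem' := by
    rintro p q ⟨hp₁, hp₂, hp₃⟩ ⟨hq₁, hq₂, hq₃⟩
    refine ⟨?_, ?_, ?_⟩ <;> simp only [Prod.fst_add, Prod.snd_add, mulVec_add]
    · linear_combination (norm := module) hp₁ + hq₁
    · linear_combination (norm := module) hp₂ + hq₂
    · linear_combination (norm := module) hp₃ + hq₃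
  smul_mem' := by
    rintro c p ⟨hp₁, hp₂, hp₃⟩
    refine ⟨?_, ?_, ?_⟩ <;> simp only [Prod.smul_fst, Prod.smul_snd, mulVec_smul]
    · linear_combination (norm := module) c • hp₁
    · linear_combination (norm := module) c • hp₂
    · linear_combination (norm := module) c • hp₃

lemma convex_setOf_inC {nx nu ny : ℕ} (E : Matrix (Fin ny) (Fin nx) ℝ)
    (F : Matrix (Fin ny) (Fin nu) ℝ) (ylo yhi : RVec ny) (σ : ℝ) :
    Convex ℝ {p : HParams nx nu | inC E F ylo yhi σ p} := by
  intro p hp q hq a b ha hb hab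
  have hsoc : ∀ {s c s' c' z z' : ℝ}, √(s ^ 2 + c ^ 2) ≤ z → √(s' ^ 2 + c' ^ 2) ≤ z' →
      √((a * s + b * s') ^ 2 + (a * c + b * c') ^ 2) ≤ a * z + b * z' := by
    intro s c s' c' z z' h h'
    calc _ ≤ √((a * s) ^ 2 + (a * c) ^ 2) + √((b * s') ^ 2 + (b * c') ^ 2) :=
          sqrt_sq_add_sq_add_le _ _ _ _
      _ = a * √(s ^ 2 + c ^ 2) + b * √(s' ^ 2 + c' ^ 2) := by
          rw [sqrt_mul_sq_add_mul_sq ha, sqrt_mul_sq_add_mul_sq hb]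
      _ ≤ a * z + b * z' := by gcongr
  intro i
  simp only [Prod.fst_add, Prod.snd_add, Prod.smul_fst, Prod.smul_snd,
    mulVec_add_mulVec_apply_smul_add_smul]
  constructor
  · linear_combination hsoc (hp i).1 (hq i).1 + (yhi i - σ) * hab
  · linear_combination hsoc (hp i).2 (hq i).2 - (ylo i + σ) * hab

lemma convex_paramSet {nx nu ny : ℕ} (A : Matrix (Fin nx) (Fin nx) ℝ)
    (B : Matrix (Fin nx) (Fin nu) ℝ) (E : Matrix (Fin ny) (Fin nx) ℝ)
    (F : Matrix (Fin ny) (Fin nu) ℝ) (ylo yhi : RVec ny) (w σ : ℝ) :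
    Convex ℝ (paramSet A B E F ylo yhi w σ) :=
  (inDSubmodule A B w).convex.inter (convex_setOf_inC E F ylo yhi σ)

open Topology in
lemma le_of_forall_mul_one_sub_le {a b : ℝ} (h : ∀ t ∈ Set.Ioo (0 : ℝ) 1, a * (1 - t) ≤ b) :
    a ≤ b := by
  have hlim : Tendsto (fun t : ℝ => a * (1 - t)) (𝓝[>] 0) (𝓝 a) := by
    have : Continuous fun t : ℝ => a * (1 - t) := by fun_prop
    simpa using this.continuousWithinAt.tendsto (x := 0) (s := Set.Ioi 0)
  exact le_of_tendsto hlim (Filter.mem_of_superset (Ioo_mem_nhdsGT one_pos) h)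

namespace StrConvVh

variable {nx nu : ℕ} {μ : ℝ} {f : HParams nx nu → ℝ}

/-- Evaluating the strong-convexity inequality at the point `a + t • (b - a)` towards both `a`
and `b` makes the gradient terms cancel. -/
lemma add_smul_sub_le (hf : StrConvVh μ f) (a b : HParams nx nu) {t : ℝ} (ht₀ : 0 ≤ t)
    (ht₁ : t ≤ 1) :
    f (a + t • (b - a)) + μ / 2 * (t * (1 - t)) * pNsq (b - a) ≤ (1 - t) * f a + t * f b := by
  set y := a + t • (b - a)
  have ha := hf a y
  have hb := hf b y
  rw [show a - y = (-t) • (b - a) by module, pNsq_smul, map_smul, smul_eq_mul] at ha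
  rw [show b - y = (1 - t) • (b - a) by module, pNsq_smul, map_smul, smul_eq_mul] at hb
  nlinarith [mul_le_mul_of_nonneg_left ha (sub_nonneg.2 ht₁), mul_le_mul_of_nonneg_left hb ht₀]

lemma sub_le_of_isMinOn (hf : StrConvVh μ f) {S : Set (HParams nx nu)} (hS : Convex ℝ S)
    {pmin : HParams nx nu} (hpmin : pmin ∈ S) (hmin : IsMinOn f S pmin) {p : HParams nx nu}
    (hp : p ∈ S) :
    μ / 2 * pNsq (p - pmin) ≤ f p - f pmin := by
  refine le_of_forall_mul_one_sub_le fun t ⟨ht₀, ht₁⟩ => ?_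
  have hy := hmin (hS.add_smul_sub_mem hpmin hp ⟨ht₀.le, ht₁.le⟩)
  have hcomb := hf.add_smul_sub_le pmin p ht₀.le ht₁.le
  refine le_of_mul_le_mul_left ?_ ht₀
  nlinarith [hy.out]

end StrConvVh

lemma IsUniqueMinOn.isMinOn {α : Type*} {f : α → ℝ} {S : Set α} {p : α}
    (h : IsUniqueMinOn f S p) : IsMinOn f S p := isMinOn_iff.2 fun q hq => by
  rcases eq_or_ne q p with rfl | hne
  · rfl
  · exact (h.2 q hq hne).le

lemma quadForm_add_Vh_le_Jcost {nx nu : ℕ} {Q Te Th : Matrix (Fin nx) (Fin nx) ℝ}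
    {R Se Sh : Matrix (Fin nu) (Fin nu) ℝ} (hQ : Q.PosSemidef) (hR : R.PosSemidef) (w : ℝ)
    {N : ℕ} (hN : 1 ≤ N) (r : HParams nx nu) (xs : ℕ → RVec nx) (us : ℕ → RVec nu)
    (p : HParams nx nu) :
    quadForm Q (xs 0 - hSeq w p.1 0) + Vh Te Th Se Sh r p
      ≤ Jcost Q Te Th R Se Sh w N r xs us p := by
  have hstage := Finset.single_le_sum
    (f := fun k => quadForm Q (xs k - hSeq w p.1 k) + quadForm R (us k - hSeq w p.2 k))
    (fun k _ => add_nonneg (quadForm_nonneg hQ _) (quadForm_nonneg hR _))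
    (Finset.mem_range.2 hN)
  have := quadForm_nonneg hR (us 0 - hSeq w p.2 0)
  simp only [Jcost]
  linarith

lemma le_Hstar {nx nu ny : ℕ} {A : Matrix (Fin nx) (Fin nx) ℝ} {B : Matrix (Fin nx) (Fin nu) ℝ}
    {E : Matrix (Fin ny) (Fin nx) ℝ} {F : Matrix (Fin ny) (Fin nu) ℝ} {ylo yhi : RVec ny}
    {Q Te Th : Matrix (Fin nx) (Fin nx) ℝ} {R Se Sh : Matrix (Fin nu) (Fin nu) ℝ} {w σ : ℝ}
    {N : ℕ} {r : HParams nx nu} {x : RVec nx} (hx : Feasible A B E F ylo yhi w σ N x) {b : ℝ}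
    (hb : ∀ xs us p, FeasSol A B E F ylo yhi w σ N x xs us p →
      b ≤ Jcost Q Te Th R Se Sh w N r xs us p) :
    b ≤ Hstar A B E F ylo yhi Q Te Th R Se Sh w σ N r x := by
  obtain ⟨xs, us, p, hsol⟩ := hx
  refine le_csInf ⟨_, xs, us, p, hsol, rfl⟩ ?_
  rintro J ⟨xs, us, p, hsol, rfl⟩
  exact hb xs us p hsol

lemma Vh_add_half_min_mul_nsq_le_Jcost {nx nu : ℕ} {Q Te Th : Matrix (Fin nx) (Fin nx) ℝ}
    {R Se Sh : Matrix (Fin nu) (Fin nu) ℝ} (hQ : Q.PosSemidef) (hR : R.PosSemidef) (w : ℝ)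
    {N : ℕ} (hN : 1 ≤ N) {μ lam : ℝ} (hμ : 0 ≤ μ) (hlam : 0 ≤ lam)
    (hlamLB : ∀ v : RVec nx, lam * nsq v ≤ quadForm Q v) (r rmin p : HParams nx nu)
    (hgrowth : μ / 2 * pNsq (p - rmin) ≤ Vh Te Th Se Sh r p - Vh Te Th Se Sh r rmin)
    (xs : ℕ → RVec nx) (us : ℕ → RVec nu) :
    Vh Te Th Se Sh r rmin + 1 / 2 * min lam (μ / 4) * nsq (xs 0 - (rmin.1.1 + rmin.1.2.2))
      ≤ Jcost Q Te Th R Se Sh w N r xs us p := by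
  have hsplit : xs 0 - (rmin.1.1 + rmin.1.2.2)
      = (xs 0 - hSeq w p.1 0) + (p.1.1 - rmin.1.1) + (p.1.2.2 - rmin.1.2.2) := by
    rw [hSeq_zero]; abel
  calc Vh Te Th Se Sh r rmin + 1 / 2 * min lam (μ / 4) * nsq (xs 0 - (rmin.1.1 + rmin.1.2.2))
      ≤ Vh Te Th Se Sh r rmin + (lam * nsq (xs 0 - hSeq w p.1 0)
          + μ / 2 * (nsq (p.1.1 - rmin.1.1) + nsq (p.1.2.2 - rmin.1.2.2))) := by
        rw [hsplit]; gcongr; exact half_min_mul_nsq_add_add_le hlam hμ _ _ _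
    _ ≤ Vh Te Th Se Sh r rmin
          + (quadForm Q (xs 0 - hSeq w p.1 0) + μ / 2 * pNsq (p - rmin)) := by
        gcongr
        · exact hlamLB _
        · exact nsq_fst_fst_add_nsq_fst_snd_snd_le_pNsq (p - rmin)
    _ ≤ quadForm Q (xs 0 - hSeq w p.1 0) + Vh Te Th Se Sh r p := by linarith
    _ ≤ Jcost Q Te Th R Se Sh w N r xs us p :=
        quadForm_add_Vh_le_Jcost hQ hR w hN r xs us p

theorem statement15_general {nx nu ny : ℕ}
    (A : Matrix (Fin nx) (Fin nx) ℝ) (B : Matrix (Fin nx) (Fin nu) ℝ)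
    (E : Matrix (Fin ny) (Fin nx) ℝ) (F : Matrix (Fin ny) (Fin nu) ℝ)
    (ylo yhi : RVec ny)
    (w σ : ℝ) (N : ℕ) (hN : 1 ≤ N)
    (Q Te Th : Matrix (Fin nx) (Fin nx) ℝ) (R Se Sh : Matrix (Fin nu) (Fin nu) ℝ)
    (hQ : Q.PosDef) (hR : R.PosDef)
    (r : HParams nx nu)
    (μ : ℝ) (hμ : 0 < μ) (hsc : StrConvVh μ (Vh Te Th Se Sh r))
    (lam : ℝ) (hlam : 0 < lam)
    (hlamLB : ∀ v : RVec nx, lam * nsq v ≤ quadForm Q v)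
    (rmin : HParams nx nu)
    (hrmin : IsUniqueMinOn (Vh Te Th Se Sh r) (paramSet A B E F ylo yhi w σ) rmin) :
    (∃ c > (0 : ℝ), ∀ x : RVec nx, Feasible A B E F ylo yhi w σ N x →
        Hstar A B E F ylo yhi Q Te Th R Se Sh w σ N r x - Vh Te Th Se Sh r rmin
          ≥ c * nsq (x - (rmin.1.1 + rmin.1.2.2))) ∧
    (∀ x : RVec nx, Feasible A B E F ylo yhi w σ N x →
        Hstar A B E F ylo yhi Q Te Th R Se Sh w σ N r x - Vh Te Th Se Sh r rmin
          ≥ (1 / 2) * min lam (μ / 4) * nsq (x - (rmin.1.1 + rmin.1.2.2))) := by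
  have hbound : ∀ x : RVec nx, Feasible A B E F ylo yhi w σ N x →
      Hstar A B E F ylo yhi Q Te Th R Se Sh w σ N r x - Vh Te Th Se Sh r rmin
        ≥ (1 / 2) * min lam (μ / 4) * nsq (x - (rmin.1.1 + rmin.1.2.2)) := by
    intro x hx
    rw [ge_iff_le, le_sub_iff_add_le']
    refine le_Hstar hx ?_
    rintro xs us p ⟨rfl, -, -, -, hpD, hpC⟩
    have hgrowth := hsc.sub_le_of_isMinOn (convex_paramSet A B E F ylo yhi w σ) hrmin.1
      hrmin.isMinOn ⟨hpD, hpC⟩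
    exact Vh_add_half_min_mul_nsq_le_Jcost hQ.posSemidef hR.posSemidef w hN hμ.le hlam.le hlamLB
      r rmin p hgrowth xs us
  exact ⟨⟨_, by positivity, hbound⟩, hbound⟩

/-- lower bound on the optimal cost: there is `c > 0` such that
`H*(x; r) − V_h(x̊, ů) ≥ c ‖x − (x̊_e + x̊_c)‖²` for all feasible `x`; in particular one may
take `c = (1/2) min{λ_min(Q), μ/4}`, where `λ_min(Q)` is the smallest eigenvalue of `Q`
(characterized by `lam`) and `V_h` is `μ`-strongly convex. -/
theorem statement15 {nx nu ny : ℕ}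
    (A : Matrix (Fin nx) (Fin nx) ℝ) (B : Matrix (Fin nx) (Fin nu) ℝ)
    (E : Matrix (Fin ny) (Fin nx) ℝ) (F : Matrix (Fin ny) (Fin nu) ℝ)
    (ylo yhi : RVec ny) (hy : ∀ i, ylo i < yhi i)
    (w σ : ℝ) (hw : 0 < w) (hσ : 0 < σ) (N : ℕ) (hN : 1 ≤ N)
    (Q Te Th : Matrix (Fin nx) (Fin nx) ℝ) (R Se Sh : Matrix (Fin nu) (Fin nu) ℝ)
    (hQ : Q.PosDef) (hR : R.PosDef) (hTe : Te.PosDef) (hSe : Se.PosDef)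
    (hTh : Th.PosDef) (hThd : Th.IsDiag) (hSh : Sh.PosDef) (hShd : Sh.IsDiag)
    (hne : (paramSet A B E F ylo yhi w σ).Nonempty)
    (r : HParams nx nu)
    (μ : ℝ) (hμ : 0 < μ) (hsc : StrConvVh μ (Vh Te Th Se Sh r))
    (lam : ℝ) (hlam : 0 < lam)
    (hlamLB : ∀ v : RVec nx, lam * nsq v ≤ quadForm Q v)
    (hlamEq : ∃ v : RVec nx, v ≠ 0 ∧ quadForm Q v = lam * nsq v)
    (rmin : HParams nx nu)
    (hrmin : IsUniqueMinOn (Vh Te Th Se Sh r) (paramSet A B E F ylo yhi w σ) rmin) :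
    (∃ c > (0 : ℝ), ∀ x : RVec nx, Feasible A B E F ylo yhi w σ N x →
        Hstar A B E F ylo yhi Q Te Th R Se Sh w σ N r x - Vh Te Th Se Sh r rmin
          ≥ c * nsq (x - (rmin.1.1 + rmin.1.2.2))) ∧
    (∀ x : RVec nx, Feasible A B E F ylo yhi w σ N x →
        Hstar A B E F ylo yhi Q Te Th R Se Sh w σ N r x - Vh Te Th Se Sh r rmin
          ≥ (1 / 2) * min lam (μ / 4) * nsq (x - (rmin.1.1 + rmin.1.2.2))) :=
  statement15_general A B E F ylo yhi w σ N hN Q Te Th R Se Sh hQ hR r μ hμ hsc lam hlam hlamLB rmin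
    hrmin
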